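/- For every n ≥ 6 with n ≡ 0 (mod 3), the decycling number of the square of the n-cycle equals n/3 + 1: ∇(Cₙ²) = n/3 + 1 = ⌈(n+1)/3⌉. -/

import Mathlib

open SimpleGraph

/-- `S` is a decycling set of `G` if the subgraph of `G` induced on the complement of `S`
is acyclic. -/
def SimpleGraph.IsDecyclingSet {V : Type*} (G : SimpleGraph V) (S : Set V) : Prop :=
  (G.induce Sᶜ).IsAcyclic

/-- The decycling number `∇(G)` of `G`: the minimum cardinality of a decycling set of `G`. -/
noncomputable def SimpleGraph.decyclingNumber {V : Type*} (G : SimpleGraph V) : ℕ :=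
  sInf {k | ∃ S : Set V, G.IsDecyclingSet S ∧ S.ncard = k}

/-- The square `Cₙ²` of the `n`-cycle: vertex set `ZMod n`, with `i` adjacent to `j` iff
`i ≠ j` and `i - j ≡ ±1` or `±2 (mod n)`. -/
def cycleSquare (n : ℕ) : SimpleGraph (ZMod n) where
  Adj i j := i ≠ j ∧ (i - j = 1 ∨ j - i = 1 ∨ i - j = 2 ∨ j - i = 2)
  symm := ⟨by intro i j ⟨h, hd⟩; exact ⟨h.symm, by tauto⟩⟩
  loopless := ⟨by intro i ⟨h, _⟩; exact h rfl⟩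

/-!
Deleting a decycling set `S` from the `4`-regular graph `Cₙ²`, which has `2n` edges, removes at
most `4|S|` edges and leaves a forest on `n - |S|` vertices, so `2n - 4|S| < n - |S|`, that is,
`3|S| > n`. Conversely, deleting `1` and the multiples of `3` leaves the path
`2, 4, 5, 7, 8, …, n - 2, n - 1` when `3 ∣ n`.
-/

namespace SimpleGraph

variable {V : Type*} {G : SimpleGraph V}

/-- A cycle would have, at its largest vertex, two distinct smaller neighbours. -/
theorem isAcyclic_of_adj_lt_unique [LinearOrder V]
    (h : ∀ ⦃v u w⦄, G.Adj v u → G.Adj v w → u < v → w < v → u = w) : G.IsAcyclic := by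
  intro u c hc
  classical
  let m := c.support.toFinset.max' ⟨u, by simp⟩
  have hm : m ∈ c.support := by simpa using c.support.toFinset.max'_mem ⟨u, by simp⟩
  have hle : ∀ x ∈ c.support, x ≤ m := fun x hx => c.support.toFinset.le_max' x (by simpa)
  let c' := c.rotate m hm
  have hc' : c'.IsCycle := hc.rotate hm
  have hlt : ∀ x ∈ c'.support, G.Adj m x → x < m := fun x hx hadj =>
    (hle x ((c.mem_support_rotate_iff m hm).1 hx)).lt_of_ne hadj.ne.symm
  have hsnd : G.Adj m c'.snd := c'.adj_snd hc'.not_nil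
  have hpen : G.Adj m c'.penultimate := (c'.adj_penultimate hc'.not_nil).symm
  exact hc'.snd_ne_penultimate <| h hsnd hpen (hlt _ (c'.getVert_mem_support _) hsnd)
    (hlt _ (c'.getVert_mem_support _) hpen)

theorem isAcyclic_hasse {α : Type*} [LinearOrder α] : (hasse α).IsAcyclic :=
  isAcyclic_of_adj_lt_unique fun v u w hu hw huv hwv => by
    rw [hasse_adj] at hu hw
    exact (hu.resolve_left fun h => h.lt.not_gt huv).unique_left
      (hw.resolve_left fun h => h.lt.not_gt hwv)

/-- Extend the forest to a spanning tree of the complete graph. -/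
theorem IsAcyclic.ncard_edgeSet_lt [Finite V] [Nonempty V] (hG : G.IsAcyclic) :
    G.edgeSet.ncard < Nat.card V := by
  have := Fintype.ofFinite V
  obtain ⟨T, hGT, -, hT⟩ :=
    (connected_top (V := V)).exists_isTree_le_of_le_of_isAcyclic le_top hG
  classical
  rw [Nat.card_eq_fintype_card, ← hT.card_edgeFinset, Nat.lt_succ_iff, ← coe_edgeFinset,
    Set.ncard_coe_finset]
  exact Finset.card_le_card (edgeFinset_mono hGT)

theorem ncard_edgeSet_le_ncard_edgeSet_induce_compl_add_sum_degree [Fintype V]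
    [DecidableRel G.Adj] (S : Finset V) :
    G.edgeSet.ncard ≤ (G.induce (S : Set V)ᶜ).edgeSet.ncard + ∑ v ∈ S, G.degree v := by
  have hsub : G.edgeSet ⊆
      Sym2.map (↑) '' (G.induce (S : Set V)ᶜ).edgeSet ∪ ⋃ v ∈ S, G.incidenceSet v := by
    intro e he
    induction e using Sym2.ind with | h x y => ?_
    by_cases hx : x ∈ S
    · exact Or.inr (Set.mem_biUnion hx ⟨he, Sym2.mem_mk_left x y⟩)
    by_cases hy : y ∈ S
    · exact Or.inr (Set.mem_biUnion hy ⟨he, Sym2.mem_mk_right x y⟩)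
    exact Or.inl ⟨s(⟨x, hx⟩, ⟨y, hy⟩), by simpa using he, rfl⟩
  have hinduce := Set.ncard_image_le (f := Sym2.map ((↑) : ((S : Set V)ᶜ : Set V) → V))
    (Set.toFinite (G.induce (S : Set V)ᶜ).edgeSet)
  have hincidence := S.set_ncard_biUnion_le G.incidenceSet
  have hdegree : ∀ v, (G.incidenceSet v).ncard = G.degree v := fun v => by
    classical
    rw [← Nat.card_coe_set_eq, Nat.card_eq_fintype_card, card_incidenceSet_eq_degree]
  simp only [hdegree] at hincidence
  have := (Set.ncard_le_ncard hsub).trans (Set.ncard_union_le _ _)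
  omega

theorem isDecyclingSet_univ : G.IsDecyclingSet Set.univ := fun v => absurd v.2 (by simp)

theorem decyclingNumber_le {S : Set V} (hS : G.IsDecyclingSet S) :
    G.decyclingNumber ≤ S.ncard :=
  Nat.sInf_le ⟨S, hS, rfl⟩

theorem le_decyclingNumber {k : ℕ} (h : ∀ S, G.IsDecyclingSet S → k ≤ S.ncard) :
    k ≤ G.decyclingNumber :=
  le_csInf ⟨_, Set.univ, isDecyclingSet_univ, rfl⟩ fun _ ⟨S, hS, hk⟩ => hk ▸ h S hS

theorem IsDecyclingSet.mul_card_add_two_mul_ncard_lt [Fintype V] [Nonempty V]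
    [DecidableRel G.Adj] {S : Set V} (hS : G.IsDecyclingSet S) {k : ℕ}
    (hG : G.IsRegularOfDegree k) (hk : 0 < k) :
    k * Fintype.card V + 2 * S.ncard < 2 * Fintype.card V + 2 * k * S.ncard := by
  classical
  have hV := Fintype.card_pos (α := V)
  rcases (Sᶜ).eq_empty_or_nonempty with hSc | ⟨v, hv⟩
  · rw [Set.compl_empty_iff.1 hSc, Set.ncard_univ, Nat.card_eq_fintype_card]
    nlinarith
  have : Nonempty (Sᶜ : Set V) := ⟨⟨v, hv⟩⟩
  have hforest := IsAcyclic.ncard_edgeSet_lt hS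
  rw [Nat.card_coe_set_eq] at hforest
  have hcompl : S.ncard + (Sᶜ).ncard = Fintype.card V := by
    rw [Set.ncard_add_ncard_compl, Nat.card_eq_fintype_card]
  have hhandshake : k * Fintype.card V = 2 * G.edgeSet.ncard := by
    rw [← coe_edgeFinset, Set.ncard_coe_finset, ← sum_degrees_eq_twice_card_edges,
      Finset.sum_const_nat fun v _ => hG v, Finset.card_univ, mul_comm]
  have hdelete := G.ncard_edgeSet_le_ncard_edgeSet_induce_compl_add_sum_degree S.toFinset
  rw [Finset.sum_const_nat fun v _ => hG v, Set.coe_toFinset,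
    ← Set.ncard_eq_toFinset_card'] at hdelete
  nlinarith

end SimpleGraph

theorem ZMod.natCast_ne_zero_of_lt {n c : ℕ} (hc : 0 < c) (hcn : c < n) : (c : ZMod n) ≠ 0 := by
  rw [Ne, ZMod.natCast_eq_zero_iff]
  exact Nat.not_dvd_of_pos_of_lt hc hcn

theorem ZMod.val_add_natCast_of_lt {n : ℕ} [NeZero n] (x : ZMod n) {d : ℕ} (hd : d < n) :
    (x + d).val = x.val + d ∨ (x + d).val + n = x.val + d := by
  rcases lt_or_ge (x.val + (d : ZMod n).val) n with h | h
  · rw [ZMod.val_add_of_lt h, ZMod.val_cast_of_lt hd]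
    exact Or.inl rfl
  · have := ZMod.val_add_val_of_le h
    rw [ZMod.val_cast_of_lt hd] at this
    omega

namespace cycleSquare

variable {n : ℕ}

instance : DecidableRel (cycleSquare n).Adj := fun _ _ => inferInstanceAs (Decidable (_ ∧ _))

def offsets (n : ℕ) : Finset (ZMod n) := {1, -1, 2, -2}

theorem adj_iff_sub_mem_offsets (hn : 3 ≤ n) {i j : ZMod n} :
    (cycleSquare n).Adj i j ↔ j - i ∈ offsets n := by
  have h1 : ((1 : ℕ) : ZMod n) ≠ 0 := ZMod.natCast_ne_zero_of_lt one_pos (by omega)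
  have h2 : ((2 : ℕ) : ZMod n) ≠ 0 := ZMod.natCast_ne_zero_of_lt two_pos (by omega)
  push_cast at h1 h2
  simp only [offsets, Finset.mem_insert, Finset.mem_singleton, cycleSquare, ← neg_sub j i,
    neg_eq_iff_eq_neg]
  constructor
  · rintro ⟨-, h⟩
    tauto
  · intro h
    refine ⟨fun hij => ?_, by tauto⟩
    rw [hij, sub_self] at h
    rcases h with h | h | h | h
    exacts [h1 h.symm, h1 (zero_eq_neg.1 h), h2 h.symm, h2 (zero_eq_neg.1 h)]

theorem card_offsets (hn : 5 ≤ n) : (offsets n).card = 4 := by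
  have hne : ∀ c : ℕ, 0 < c → c < 5 → (c : ZMod n) ≠ 0 := fun c hc hc5 =>
    ZMod.natCast_ne_zero_of_lt hc (by omega)
  have h1 := hne 1 (by norm_num) (by norm_num)
  have h2 := hne 2 (by norm_num) (by norm_num)
  have h3 := hne 3 (by norm_num) (by norm_num)
  have h4 := hne 4 (by norm_num) (by norm_num)
  push_cast at h1 h2 h3 h4
  rw [offsets, Finset.card_insert_of_notMem, Finset.card_insert_of_notMem, Finset.card_pair]
  · exact fun h => h4 (by linear_combination h)
  · simp only [Finset.mem_insert, Finset.mem_singleton, not_or]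
    exact ⟨fun h => h3 (by linear_combination -h), fun h => h1 (by linear_combination h)⟩
  · simp only [Finset.mem_insert, Finset.mem_singleton, not_or]
    exact ⟨fun h => h2 (by linear_combination h), fun h => h1 (by linear_combination -h),
      fun h => h3 (by linear_combination h)⟩

theorem isRegularOfDegree_four [NeZero n] (hn : 5 ≤ n) :
    (cycleSquare n).IsRegularOfDegree 4 := by
  intro v
  have hN : (cycleSquare n).neighborFinset v = (offsets n).image (v + ·) := by
    ext w
    rw [mem_neighborFinset, adj_iff_sub_mem_offsets (by omega), Finset.mem_image]
    refine ⟨fun h => ⟨w - v, h, add_sub_cancel v w⟩, ?_⟩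
    rintro ⟨d, hd, rfl⟩
    simpa using hd
  rw [← card_neighborFinset_eq_degree, hN,
    Finset.card_image_of_injective _ (add_right_injective v), card_offsets hn]

def decyclingSet (n : ℕ) : Set (ZMod n) :=
  insert 1 (Set.range fun k : Fin (n / 3) => ((3 * k : ℕ) : ZMod n))

theorem ncard_decyclingSet (hn : 2 ≤ n) : (decyclingSet n).ncard = n / 3 + 1 := by
  have : Fact (1 < n) := ⟨hn⟩
  have hval : ∀ k : Fin (n / 3), ((3 * k : ℕ) : ZMod n).val = 3 * k :=
    fun k => ZMod.val_cast_of_lt (by omega)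
  have hinj : Function.Injective fun k : Fin (n / 3) => ((3 * k : ℕ) : ZMod n) := by
    intro a b hab
    have := congrArg ZMod.val hab
    simp only [hval] at this
    omega
  rw [decyclingSet, Set.ncard_insert_of_notMem, Set.ncard_range_of_injective hinj, Nat.card_fin]
  rintro ⟨k, hk⟩
  have := congrArg ZMod.val hk
  rw [hval, ZMod.val_one] at this
  omega

theorem val_of_notMem_decyclingSet [NeZero n] (h3 : 3 ∣ n) {x : ZMod n}
    (hx : x ∉ decyclingSet n) : 2 ≤ x.val ∧ x.val % 3 ≠ 0 := by
  simp only [decyclingSet, Set.mem_insert_iff, Set.mem_range, not_or, not_exists] at hx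
  have hmul : x.val % 3 ≠ 0 := fun h => hx.2 ⟨x.val / 3, by have := x.val_lt; omega⟩ <| by
    change ((3 * (x.val / 3) : ℕ) : ZMod n) = x
    rw [Nat.mul_div_cancel' (Nat.dvd_of_mod_eq_zero h), ZMod.natCast_zmod_val]
  refine ⟨?_, hmul⟩
  by_contra! h
  interval_cases hv : x.val
  · exact hmul rfl
  · have : Fact (1 < n) := ⟨by have := NeZero.pos n; omega⟩
    exact hx.1 (ZMod.val_injective n (hv.trans (ZMod.val_one n).symm))

/-- Numbers the path `2, 4, 5, 7, 8, …, n - 2, n - 1` left after deleting `decyclingSet n`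
consecutively. -/
def pathIndex (x : ZMod n) : ℕ := x.val - x.val / 3

theorem pathIndex_injOn [NeZero n] (h3 : 3 ∣ n) : Set.InjOn pathIndex (decyclingSet n)ᶜ := by
  intro x hx y hy hxy
  have := val_of_notMem_decyclingSet h3 hx
  have := val_of_notMem_decyclingSet h3 hy
  exact ZMod.val_injective n (by unfold pathIndex at hxy; omega)

/-- Neither `0` nor `1` lies outside `decyclingSet n`, so such a step does not wrap around. -/
theorem pathIndex_add_natCast [NeZero n] (h3 : 3 ∣ n) {x : ZMod n} {d : ℕ} (hd1 : 1 ≤ d)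
    (hd2 : d ≤ 2) (hx : x ∉ decyclingSet n) (hxd : x + (d : ZMod n) ∉ decyclingSet n) :
    pathIndex (x + (d : ZMod n)) = pathIndex x + 1 := by
  have := val_of_notMem_decyclingSet h3 hx
  have := val_of_notMem_decyclingSet h3 hxd
  have := x.val_lt
  unfold pathIndex
  rcases ZMod.val_add_natCast_of_lt x (d := d) (by omega) with h | h <;> omega

theorem isDecyclingSet_decyclingSet [NeZero n] (hn : 3 ≤ n) (h3 : 3 ∣ n) :
    (cycleSquare n).IsDecyclingSet (decyclingSet n) := by
  have hstep : ∀ ⦃x y : ZMod n⦄ (d : ℕ), 1 ≤ d → d ≤ 2 → x ∉ decyclingSet n →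
      y ∉ decyclingSet n → y = x + d → (hasse ℕ).Adj (pathIndex x) (pathIndex y) := by
    rintro x y d hd1 hd2 hx hy rfl
    rw [hasse_adj, Nat.covBy_iff_add_one_eq, Nat.covBy_iff_add_one_eq]
    exact Or.inl (pathIndex_add_natCast h3 hd1 hd2 hx hy).symm
  let f : (cycleSquare n).induce (decyclingSet n)ᶜ →g hasse ℕ :=
    { toFun := fun x => pathIndex x.1
      map_rel' := by
        rintro ⟨x, hx⟩ ⟨y, hy⟩ hxy
        have hxy : y - x ∈ offsets n := (adj_iff_sub_mem_offsets hn).1 hxy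
        simp only [offsets, Finset.mem_insert, Finset.mem_singleton] at hxy
        rcases hxy with h | h | h | h
        · exact hstep 1 le_rfl one_le_two hx hy (by push_cast; linear_combination h)
        · exact (hstep 1 le_rfl one_le_two hy hx (by push_cast; linear_combination -h)).symm
        · exact hstep 2 one_le_two le_rfl hx hy (by push_cast; linear_combination h)
        · exact (hstep 2 one_le_two le_rfl hy hx (by push_cast; linear_combination -h)).symm }
  exact isAcyclic_hasse.comap f fun x y hxy => Subtype.ext (pathIndex_injOn h3 x.2 y.2 hxy)

end cycleSquare

/-- For every `n ≥ 6` with `n ≡ 0 (mod 3)`, `∇(Cₙ²) = n/3 + 1 = ⌈(n+1)/3⌉`. -/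
theorem decyclingNumber_cycleSquare_zero_mod_three (n : ℕ) (hn : 6 ≤ n) (h3 : n % 3 = 0) :
    (cycleSquare n).decyclingNumber = n / 3 + 1 ∧ n / 3 + 1 = ⌈((n : ℚ) + 1) / 3⌉₊ := by
  have : NeZero n := ⟨by omega⟩
  have h3' : 3 ∣ n := Nat.dvd_of_mod_eq_zero h3
  refine ⟨le_antisymm ?_ ?_, ?_⟩
  · calc (cycleSquare n).decyclingNumber
        ≤ (cycleSquare.decyclingSet n).ncard :=
          decyclingNumber_le (cycleSquare.isDecyclingSet_decyclingSet (by omega) h3')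
      _ = n / 3 + 1 := cycleSquare.ncard_decyclingSet (by omega)
  · refine le_decyclingNumber fun S hS => ?_
    have := hS.mul_card_add_two_mul_ncard_lt (cycleSquare.isRegularOfDegree_four (by omega))
      four_pos
    rw [ZMod.card] at this
    omega
  · obtain ⟨m, rfl⟩ := h3'
    rw [Nat.mul_div_cancel_left m three_pos, eq_comm, Nat.ceil_eq_iff m.succ_ne_zero]
    push_cast
    constructor <;> linarith
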